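/- A trivial FCM (one whose directed graph contains no directed cycles) reaches a static state after at most L inference iterations, where L is the length of the longest directed path: for every vertex v and all k ≥ L, the state x_v(k+1) = x_v(k), assuming no external input sequence. -/
import Mathlib

lemma fcm_aux (V : Type*) (E : V → V → Prop)
    (F : V → (V → Bool) → Bool)
    (hdep : ∀ v s t, (∀ u, E u v → s u = t u) → F v s = F v t)
    (x : V → ℕ → Bool)
    (hupd : ∀ v k, x v (k + 1) = F v (fun u => x u k))
    (hsrc : ∀ v, (∀ u, ¬ E u v) → ∀ k, x v (k + 1) = x v k) :
    ∀ n v, (∀ (m : ℕ) (p : ℕ → V), p m = v → (∀ i < m, E (p i) (p (i + 1))) → m ≤ n) →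
      ∀ k, n ≤ k → x v (k + 1) = x v k := by
  intro n
  induction n with
  | zero =>
    intro v hv k _
    apply hsrc
    intro u hu
    have := hv 1 (fun i => if i = 0 then u else v) (by simp)
      (by intro i hi; interval_cases i; simpa using hu)
    omega
  | succ n ih =>
    intro v hv k hk
    by_cases h : ∃ u, E u v
    · obtain ⟨j, rfl⟩ : ∃ j, k = j + 1 := ⟨k - 1, by omega⟩
      rw [hupd, hupd]
      apply hdep
      intro u hu
      apply ih u ?_ j (by omega)
      intro m p hp hpath
      have hle : m + 1 ≤ n + 1 := by
        apply hv (m + 1) (fun i => if i < m + 1 then p i else v)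
        · simp
        · intro i hi
          by_cases hm : i < m
          · simp only [if_pos (by omega : i < m + 1), if_pos (by omega : i + 1 < m + 1)]
            exact hpath i hm
          · simp only [if_pos (by omega : i < m + 1), if_neg (by omega : ¬ i + 1 < m + 1)]
            have hi' : i = m := by omega
            rw [hi', hp]; exact hu
      omega
    · push_neg at h
      exact hsrc v h k

/-- A trivial (acyclic) FCM, whose longest directed path has length `L`, becomes
static after at most `L` synchronous inference iterations, assuming each vertex's
new state depends only on its in-neighbors and sources keep a constant state. -/
theorem trivial_fcm_static (V : Type*) [Fintype V] (E : V → V → Prop) (L : ℕ)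
    (hL : ∀ (m : ℕ) (p : ℕ → V), (∀ i < m, E (p i) (p (i + 1))) → m ≤ L)
    (F : V → (V → Bool) → Bool)
    (hdep : ∀ v s t, (∀ u, E u v → s u = t u) → F v s = F v t)
    (x : V → ℕ → Bool)
    (hupd : ∀ v k, x v (k + 1) = F v (fun u => x u k))
    (hsrc : ∀ v, (∀ u, ¬ E u v) → ∀ k, x v (k + 1) = x v k) :
    ∀ v k, L ≤ k → x v (k + 1) = x v k := by
  intro v k hk
  exact fcm_aux V E F hdep x hupd hsrc L v (fun m p _ hp => hL m p hp) k hk
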